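/- arXiv:1801.05209 — 3 statements merged into one kernel-verified Lean document; each statement's English description precedes it below -/
import Mathlib

section
/- For every n ≥ 3, there exists an automorphism ε of the braid group B_n satisfying ε(σ_i) = σ_i⁻¹ for every generator σ_i (i.e., ε inverts each standard generator), and ε is not an inner automorphism: ε does not lie in the range of the conjugation homomorphism MulAut.conj : B_n →* MulAut B_n. -/
/-- The braid relations on `n` strands, as elements of the free group on `Fin (n-1)`. -/
def braidRels (n : ℕ) : Set (FreeGroup (Fin (n - 1))) :=
  {r | ∃ i j : Fin (n - 1), 2 ≤ |(i : ℤ) - (j : ℤ)| ∧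
      r = FreeGroup.of i * FreeGroup.of j * (FreeGroup.of j * FreeGroup.of i)⁻¹} ∪
  {r | ∃ i j : Fin (n - 1), |(i : ℤ) - (j : ℤ)| = 1 ∧
      r = FreeGroup.of i * FreeGroup.of j * FreeGroup.of i *
        (FreeGroup.of j * FreeGroup.of i * FreeGroup.of j)⁻¹}

/-- The braid group on `n` strands. -/
abbrev B (n : ℕ) : Type := PresentedGroup (braidRels n)

/-- The standard generators of the braid group. -/
def σ {n : ℕ} (i : Fin (n - 1)) : B n := PresentedGroup.of i

lemma braid_rel_one {n : ℕ} {r : FreeGroup (Fin (n - 1))} (hr : r ∈ braidRels n) :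
    (QuotientGroup.mk r : B n) = 1 :=
  (QuotientGroup.eq_one_iff r).mpr (Subgroup.subset_normalClosure hr)

lemma braid_comm {n : ℕ} {i j : Fin (n - 1)} (h : 2 ≤ |(i : ℤ) - (j : ℤ)|) :
    σ i * σ j = σ j * σ i := by
  have := braid_rel_one (n := n) (Or.inl ⟨i, j, h, rfl⟩)
  have h2 : (QuotientGroup.mk (FreeGroup.of i * FreeGroup.of j *
      (FreeGroup.of j * FreeGroup.of i)⁻¹) : B n)
      = σ i * σ j * (σ j * σ i)⁻¹ := rfl
  rw [h2] at this
  exact mul_inv_eq_one.mp this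

lemma braid_braid {n : ℕ} {i j : Fin (n - 1)} (h : |(i : ℤ) - (j : ℤ)| = 1) :
    σ i * σ j * σ i = σ j * σ i * σ j := by
  have := braid_rel_one (n := n) (Or.inr ⟨i, j, h, rfl⟩)
  have h2 : (QuotientGroup.mk (FreeGroup.of i * FreeGroup.of j * FreeGroup.of i *
      (FreeGroup.of j * FreeGroup.of i * FreeGroup.of j)⁻¹) : B n)
      = σ i * σ j * σ i * (σ j * σ i * σ j)⁻¹ := rfl
  rw [h2] at this
  exact mul_inv_eq_one.mp this

lemma inv_rels (n : ℕ) : ∀ r ∈ braidRels n,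
    FreeGroup.lift (fun i => (σ (n := n) i)⁻¹) r = 1 := by
  rintro r (⟨i, j, h, rfl⟩ | ⟨i, j, h, rfl⟩) <;> simp only [map_mul, map_inv, FreeGroup.lift_apply_of]
  · have := braid_comm (n := n) h
    rw [show ((σ i)⁻¹ * (σ j)⁻¹ * ((σ j)⁻¹ * (σ i)⁻¹)⁻¹ : B n)
      = (σ j * σ i)⁻¹ * (σ i * σ j) by group, ← this]
    group
  · have h' : |(j : ℤ) - (i : ℤ)| = 1 := by rw [abs_sub_comm]; exact h
    have := braid_braid (n := n) h'
    rw [show ((σ i)⁻¹ * (σ j)⁻¹ * (σ i)⁻¹ * ((σ j)⁻¹ * (σ i)⁻¹ * (σ j)⁻¹)⁻¹ : B n)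
      = (σ i * σ j * σ i)⁻¹ * (σ j * σ i * σ j) by group, ← this]
    group

/-- The inverting endomorphism. -/
def invHom (n : ℕ) : B n →* B n := PresentedGroup.toGroup (inv_rels n)

lemma invHom_of {n : ℕ} (i : Fin (n - 1)) : invHom n (σ i) = (σ i)⁻¹ :=
  PresentedGroup.toGroup.of (inv_rels n)

lemma invHom_invol (n : ℕ) : (invHom n).comp (invHom n) = MonoidHom.id (B n) := by
  apply PresentedGroup.ext
  intro x
  show invHom n (invHom n (σ x)) = σ x
  rw [invHom_of, map_inv, invHom_of, inv_inv]

/-- Abelianization-like map to ℤ. -/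
def deg (n : ℕ) : B n →* Multiplicative ℤ :=
  PresentedGroup.toGroup (f := fun _ => Multiplicative.ofAdd (1 : ℤ)) (by
    rintro r (⟨i, j, h, rfl⟩ | ⟨i, j, h, rfl⟩) <;>
      simp only [map_mul, map_inv, FreeGroup.lift_apply_of] <;> group)

lemma deg_of {n : ℕ} (i : Fin (n - 1)) : deg n (σ i) = Multiplicative.ofAdd (1 : ℤ) :=
  PresentedGroup.toGroup.of _

/-- For every `n ≥ 3`, there is a non-inner automorphism of `B n` inverting each
standard generator. -/
theorem exists_inverting_outer_automorphism (n : ℕ) (hn : 3 ≤ n) :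
    ∃ ε : MulAut (B n), (∀ i : Fin (n - 1), ε (σ i) = (σ i)⁻¹) ∧
      ε ∉ (MulAut.conj (G := B n)).range := by
  refine ⟨(invHom n).toMulEquiv (invHom n) (invHom_invol n) (invHom_invol n),
    fun i => invHom_of i, ?_⟩
  rintro ⟨x, hx⟩
  have hi : 0 < n - 1 := by omega
  set i : Fin (n - 1) := ⟨0, hi⟩
  have h1 : (MulAut.conj x) (σ i) = (σ i)⁻¹ := by
    rw [hx]; rfl
  have h2 : deg n ((MulAut.conj x) (σ i)) = deg n (σ i) := by
    simp [MulAut.conj_apply, map_mul, map_inv, deg_of]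
  rw [h1, map_inv, deg_of] at h2
  have : (-1 : ℤ) = 1 := by
    have := congrArg Multiplicative.toAdd h2
    simp at this
  omega
end

section
/- For every n ≥ 5, the lower central series and the derived series of the braid group B_n both stabilize at the commutator subgroup: for every k ≥ 1, lowerCentralSeries B_n k = commutator B_n and derivedSeries B_n k = commutator B_n. In particular the commutator subgroup [B_n, B_n] is a perfect group for n ≥ 5. -/
open Subgroup

open scoped commutatorElement

section Metabelian

variable {G : Type*} [Group G]

theorem eq_of_braid_of_commute {x y : G} (h : x * y * x = y * x * y) (hc : Commute x y) :
    x = y := by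
  rw [hc.eq] at h
  exact mul_left_cancel h

theorem inv_mul_mem_commutator_of_braid {x y : G} (h : x * y * x = y * x * y) :
    x⁻¹ * y ∈ commutator G := by
  have h' := congrArg Abelianization.of h
  simp only [map_mul] at h'
  exact QuotientGroup.eq.mp (eq_of_braid_of_commute h' (Commute.all (Abelianization.of x) _))

theorem derivedSeries_quotient_derivedSeries (k : ℕ) :
    derivedSeries (G ⧸ derivedSeries G k) k = ⊥ := by
  rw [← map_derivedSeries_eq (QuotientGroup.mk'_surjective _), Subgroup.map_eq_bot_iff,
    QuotientGroup.ker_mk']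

theorem commute_of_mem_commutator (hG : derivedSeries G 2 = ⊥) {x y : G}
    (hx : x ∈ commutator G) (hy : y ∈ commutator G) : Commute x y := by
  have hxy : ⁅x, y⁆ ∈ derivedSeries G 2 := by
    rw [derivedSeries_succ, derivedSeries_one]
    exact commutator_mem_commutator hx hy
  rw [hG, mem_bot] at hxy
  exact commutatorElement_eq_one_iff_commute.mp hxy

theorem eq_of_braid_chain (hG : derivedSeries G 2 = ⊥) {a b c d : G}
    (hab : a * b * a = b * a * b) (hbc : b * c * b = c * b * c) (hcd : c * d * c = d * c * d)
    (hac : Commute a c) (had : Commute a d) (hbd : Commute b d) : a = b ∧ b = c ∧ c = d := by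
  have hd : a⁻¹ * d ∈ commutator G := by
    have := mul_mem (mul_mem (inv_mul_mem_commutator_of_braid hab)
      (inv_mul_mem_commutator_of_braid hbc)) (inv_mul_mem_commutator_of_braid hcd)
    rwa [show a⁻¹ * b * (b⁻¹ * c) * (c⁻¹ * d) = a⁻¹ * d by group] at this
  obtain ⟨k, hk, rfl⟩ : ∃ k ∈ commutator G, b = a * k :=
    ⟨a⁻¹ * b, inv_mul_mem_commutator_of_braid hab, by group⟩
  obtain ⟨l, hl, rfl⟩ : ∃ l ∈ commutator G, d = a * l := ⟨a⁻¹ * d, hd, by group⟩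
  have hal : Commute a l := mul_left_cancel (had.eq.trans (mul_assoc a l a))
  have hka : Commute k a := mul_left_cancel <| mul_right_cancel (b := l) <|
    calc a * (k * a) * l = a * k * (a * l) := by group
      _ = a * l * (a * k) := hbd.eq
      _ = a * (l * a) * k := by group
      _ = a * a * (l * k) := by rw [← hal.eq]; group
      _ = a * a * (k * l) := by rw [(commute_of_mem_commutator hG hl hk).eq]
      _ = a * (a * k) * l := by group
  have hb : a = a * k := eq_of_braid_of_commute hab ((Commute.refl a).mul_right hka.symm)
  rw [← hb] at hbc ⊢
  obtain rfl : a = c := eq_of_braid_of_commute hbc hac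
  exact ⟨rfl, rfl, eq_of_braid_of_commute hcd had⟩

end Metabelian

theorem PresentedGroup.commute_map {α H : Type*} [Group H] {rels : Set (FreeGroup α)}
    (f : PresentedGroup rels →* H) (h : ∀ i j, Commute (f (of i)) (f (of j)))
    (x y : PresentedGroup rels) : Commute (f x) (f y) := by
  have hrange : f.range = closure (Set.range (f ∘ of)) := by
    rw [MonoidHom.range_eq_map, ← closure_range_of, MonoidHom.map_closure, ← Set.range_comp]
  have : IsMulCommutative f.range :=
    hrange ▸ isMulCommutative_closure (by rintro _ ⟨i, rfl⟩ _ ⟨j, rfl⟩; exact h i j)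
  exact congrArg Subtype.val (this.is_comm.comm (⟨f x, x, rfl⟩ : f.range) ⟨f y, y, rfl⟩)

section Braid

variable {n : ℕ}

theorem σ_braid {i j : Fin (n - 1)} (h : (j : ℕ) = i + 1) :
    σ i * σ j * σ i = σ j * σ i * σ j :=
  PresentedGroup.mk_eq_mk_of_mul_inv_mem <|
    Or.inr ⟨i, j, by rw [abs_eq zero_le_one]; omega, rfl⟩

theorem σ_commute {i j : Fin (n - 1)} (h : (i : ℕ) + 2 ≤ j) : Commute (σ i) (σ j) :=
  PresentedGroup.mk_eq_mk_of_mul_inv_mem (Or.inl ⟨i, j, le_abs.mpr (Or.inr (by omega)), rfl⟩)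

variable {H : Type*} [Group H]

theorem map_σ_eq_map_σ_succ (hn : 5 ≤ n) (f : B n →* H) (hH : derivedSeries H 2 = ⊥) (i : ℕ)
    (hi : i + 1 < n - 1) : f (σ ⟨i, by omega⟩) = f (σ ⟨i + 1, hi⟩) := by
  have braid (t : ℕ) (ht : t + 1 < n - 1) :
      f (σ ⟨t, by omega⟩) * f (σ ⟨t + 1, ht⟩) * f (σ ⟨t, by omega⟩) =
        f (σ ⟨t + 1, ht⟩) * f (σ ⟨t, by omega⟩) * f (σ ⟨t + 1, ht⟩) := by
    simpa only [map_mul] using congrArg f (σ_braid rfl)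
  have comm (s t : ℕ) (hst : s + 2 ≤ t) (ht : t < n - 1) :
      Commute (f (σ ⟨s, by omega⟩)) (f (σ ⟨t, ht⟩)) :=
    (σ_commute hst).map f
  -- a window of four consecutive generators around `i`, `i + 1`; this is where `5 ≤ n` enters
  obtain ⟨m, hmi, him, hm⟩ : ∃ m, m ≤ i ∧ i ≤ m + 2 ∧ m + 3 < n - 1 :=
    ⟨min i (n - 5), by omega, by omega, by omega⟩
  obtain ⟨hab, hbc, hcd⟩ := eq_of_braid_chain hH (braid m (by omega)) (braid (m + 1) (by omega))
    (braid (m + 2) hm) (comm m (m + 2) le_rfl (by omega)) (comm m (m + 3) (by omega) hm)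
    (comm (m + 1) (m + 3) le_rfl hm)
  rcases (by omega : i = m ∨ i = m + 1 ∨ i = m + 2) with rfl | rfl | rfl
  exacts [hab, hbc, hcd]

theorem map_σ_eq_map_σ (hn : 5 ≤ n) (f : B n →* H) (hH : derivedSeries H 2 = ⊥)
    (i j : Fin (n - 1)) : f (σ i) = f (σ j) := by
  suffices h : ∀ (i : ℕ) (hi : i < n - 1), f (σ ⟨i, hi⟩) = f (σ ⟨0, by omega⟩) from
    (h i i.2).trans (h j j.2).symm
  intro i hi
  induction i with
  | zero => rfl
  | succ i ih => exact (map_σ_eq_map_σ_succ hn f hH i hi).symm.trans (ih (by omega))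

theorem braid_commutator_commutator_eq (hn : 5 ≤ n) :
    ⁅commutator (B n), commutator (B n)⁆ = commutator (B n) := by
  refine le_antisymm (commutator_le_left _ _) ?_
  refine Subgroup.Normal.quotient_commutative_iff_commutator_le.mp ⟨⟨fun x y => ?_⟩⟩
  obtain ⟨x, rfl⟩ := QuotientGroup.mk'_surjective _ x
  obtain ⟨y, rfl⟩ := QuotientGroup.mk'_surjective _ y
  refine (PresentedGroup.commute_map _ (fun i j => ?_) x y).eq
  exact map_σ_eq_map_σ hn (QuotientGroup.mk' _) (derivedSeries_quotient_derivedSeries 2) i j ▸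
    Commute.refl _

end Braid

section PerfectCommutator

variable {G : Type*} [Group G] (h : ⁅commutator G, commutator G⁆ = commutator G)
include h

theorem derivedSeries_eq_commutator_of_commutator_perfect {k : ℕ} (hk : 1 ≤ k) :
    derivedSeries G k = commutator G := by
  induction k, hk using Nat.le_induction with
  | base => exact derivedSeries_one G
  | succ k _ ih => rw [derivedSeries_succ, ih, h]

theorem top_lowerCentralSeries_eq_commutator_of_commutator_perfect {k : ℕ} (hk : 1 ≤ k) :
    (⊤ : Subgroup G).lowerCentralSeries k = commutator G := by
  induction k, hk using Nat.le_induction with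
  | base => exact top_lowerCentralSeries_one
  | succ k _ ih =>
    rw [Subgroup.lowerCentralSeries_succ, ih]
    exact le_antisymm (commutator_le_left _ _) (h.ge.trans (commutator_mono le_rfl le_top))

end PerfectCommutator

/-- For `n ≥ 5`, the lower central series and derived series of `B n` both
stabilize at the commutator subgroup from the first step onward. -/
theorem lowerCentralSeries_derivedSeries_braid_stabilize (n : ℕ) (hn : 5 ≤ n) :
    ∀ k : ℕ, 1 ≤ k →
      (⊤ : Subgroup (B n)).lowerCentralSeries k = commutator (B n) ∧
      derivedSeries (B n) k = commutator (B n) := by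
  have hperfect := braid_commutator_commutator_eq hn
  exact fun _ hk => ⟨top_lowerCentralSeries_eq_commutator_of_commutator_perfect hperfect hk,
    derivedSeries_eq_commutator_of_commutator_perfect hperfect hk⟩
end

section
/- (Putman's connectivity lemma.) Let G be a group acting on the vertex set V of a simple graph X by graph automorphisms (i.e., for all g ∈ G and vertices a, b, if a and b are adjacent in X then g • a and g • b are adjacent in X). Let v be a vertex of X and let S be a subset of G generating G (Subgroup.closure S = ⊤). Suppose: (1) for every vertex u of X there exists g ∈ G such that g • v is reachable from u in X (the orbit G·v meets every connected component); and (2) for every s ∈ S, both s • v and s⁻¹ • v are reachable from v in X. Then X is connected. -/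
/-- Putman's connectivity lemma: if a group `G` acts on a simple graph `X` by graph
automorphisms, `S` generates `G`, the orbit of a vertex `v` meets every connected
component of `X`, and for each `s ∈ S` both `s • v` and `s⁻¹ • v` are reachable
from `v`, then `X` is connected. -/
theorem putman_connectivity {V G : Type*} [Group G] [MulAction G V]
    (X : SimpleGraph V)
    (hact : ∀ (g : G) (a b : V), X.Adj a b → X.Adj (g • a) (g • b))
    (v : V) (S : Set G) (hS : Subgroup.closure S = ⊤)
    (h1 : ∀ u : V, ∃ g : G, X.Reachable u (g • v))
    (h2 : ∀ s ∈ S, X.Reachable v (s • v) ∧ X.Reachable v (s⁻¹ • v)) :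
    X.Connected := by
  have hreach : ∀ (g : G) (a b : V), X.Reachable a b → X.Reachable (g • a) (g • b) := by
    intro g a b h
    exact h.map ⟨(g • ·), fun h => hact g _ _ h⟩
  have key : ∀ g : G, X.Reachable v (g • v) := by
    intro g
    have hg : g ∈ Subgroup.closure S := by rw [hS]; trivial
    induction hg using Subgroup.closure_induction with
    | mem s hs => exact (h2 s hs).1
    | one => rw [one_smul]
    | mul x y _ _ hx hy =>
        refine hx.trans ?_
        have := hreach x _ _ hy
        rwa [smul_smul] at this
    | inv x _ hx =>
        have := hreach x⁻¹ _ _ hx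
        rw [smul_smul, inv_mul_cancel, one_smul] at this
        exact this.symm
  have : Nonempty V := ⟨v⟩
  rw [SimpleGraph.connected_iff]
  refine ⟨?_, this⟩
  intro a b
  obtain ⟨g, hg⟩ := h1 a
  obtain ⟨g', hg'⟩ := h1 b
  exact hg.trans ((key g).symm.trans ((key g').trans hg'.symm))
end
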